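/- If α ∈ [1/2, 1], then for any graph G the matrix A_α(G) is positive semidefinite. If moreover α ∈ (1/2, 1] and G has no isolated vertices, then A_α(G) is positive definite. -/

import Mathlib

/-- The `A_α`-matrix of a graph: `α·D(G) + (1-α)·A(G)`. -/
noncomputable def Aalpha {n : ℕ} (α : ℝ) (G : SimpleGraph (Fin n)) [DecidableRel G.Adj] :
    Matrix (Fin n) (Fin n) ℝ :=
  α • Matrix.diagonal (fun v => (G.degree v : ℝ)) + (1 - α) • G.adjMatrix ℝ

/-!
Write `A_α(G) = (2α - 1) D + (1 - α) Q` with `Q = D + A` the signless Laplacian. For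
`α ∈ [1/2, 1]` both coefficients are nonnegative; `D` is a nonnegative diagonal matrix and
`Q = N Nᵀ` for the vertex–edge incidence matrix `N`, so both summands are positive
semidefinite. If `α > 1/2` and every degree is positive, the first summand is positive definite.
-/

namespace SimpleGraph

open Matrix

variable {V : Type*} [Fintype V] [DecidableEq V] (G : SimpleGraph V) [DecidableRel G.Adj]
variable (R : Type*)

theorem degMatrix_add_adjMatrix_eq_incMatrix_mul_transpose [Semiring R] :
    G.degMatrix R + G.adjMatrix R = G.incMatrix R * (G.incMatrix R)ᵀ := by
  rw [incMatrix_mul_transpose]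
  ext a b
  by_cases hab : a = b
  · subst hab
    simp [degMatrix]
  · simp [degMatrix, hab]

theorem posSemidef_degMatrix_add_adjMatrix [CommRing R] [PartialOrder R] [StarRing R]
    [TrivialStar R] [StarOrderedRing R] : (G.degMatrix R + G.adjMatrix R).PosSemidef := by
  rw [degMatrix_add_adjMatrix_eq_incMatrix_mul_transpose,
    ← conjTranspose_eq_transpose_of_trivial]
  exact posSemidef_self_mul_conjTranspose _

theorem posSemidef_degMatrix [CommRing R] [PartialOrder R] [StarRing R] [StarOrderedRing R] :
    (G.degMatrix R).PosSemidef :=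
  PosSemidef.diagonal fun v => Nat.cast_nonneg (G.degree v)

theorem posDef_degMatrix [CommRing R] [LinearOrder R] [IsStrictOrderedRing R] [StarRing R]
    [StarOrderedRing R] (h : ∀ v, 0 < G.degree v) : (G.degMatrix R).PosDef :=
  PosDef.diagonal fun v => Nat.cast_pos.2 (h v)

end SimpleGraph

theorem Aalpha_eq_smul_degMatrix_add_smul {n : ℕ} (α : ℝ) (G : SimpleGraph (Fin n))
    [DecidableRel G.Adj] :
    Aalpha α G =
      (2 * α - 1) • G.degMatrix ℝ + (1 - α) • (G.degMatrix ℝ + G.adjMatrix ℝ) := by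
  rw [Aalpha, ← SimpleGraph.degMatrix]
  module

theorem Aalpha_posSemidef_posDef (n : ℕ) (G : SimpleGraph (Fin n)) [DecidableRel G.Adj]
    (α : ℝ) (hα0 : 1 / 2 ≤ α) (hα1 : α ≤ 1) :
    (Aalpha α G).PosSemidef ∧
    ((1 / 2 < α ∧ ∀ v : Fin n, 0 < G.degree v) → (Aalpha α G).PosDef) := by
  rw [Aalpha_eq_smul_degMatrix_add_smul]
  have hQ := (G.posSemidef_degMatrix_add_adjMatrix ℝ).smul (sub_nonneg.2 hα1)
  refine ⟨((G.posSemidef_degMatrix ℝ).smul (by linarith)).add hQ, fun ⟨hα, hdeg⟩ => ?_⟩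
  exact ((G.posDef_degMatrix ℝ hdeg).smul (by linarith)).add_posSemidef hQ
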